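/- Let F be a finite field with |F| = Q, let M ∈ GL(2, F) have irreducible characteristic polynomial over F and multiplicative order Q² − 1, and set H̄ = ⟨M^{Q−1}⟩. Then for every 1-dimensional subspace l of F², the stabilizer of l in H̄ is Stab_{H̄}(l) = {I₂, −I₂}. -/

import Mathlib

/-!
The characteristic polynomial of `M` is irreducible of degree 2, so `M` has no eigenvector.
An eigenspace of a matrix commuting with `M` is `M`-invariant, hence not a line, hence all of
`F²`: a matrix commuting with `M` that has an eigenvector is scalar. An element of
`⟨M^(Q-1)⟩` stabilizing `l` is therefore a scalar `μ` with `μ^(Q+1) = 1 = μ^(Q-1)`, i.e.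
`μ = ±1`. Conversely, for odd `Q` the element `(M^(Q-1))^((Q+1)/2)` squares to `1` and commutes
with `M`, so it is `±1`, and it is not `1` because `M` has order `Q² - 1`; for even `Q`, `-1 = 1`.
-/

open Module

/-- The action of `A ∈ GL(n, F)` on subspaces of `F^n`: `U · A` is the image of `U`
under the invertible linear map given by the matrix `A`. -/
noncomputable def mapGL {F : Type*} [Field F] {n : ℕ}
    (A : GL (Fin n) F) (U : Submodule F (Fin n → F)) : Submodule F (Fin n → F) :=
  U.map (Matrix.toLin' (A : Matrix (Fin n) (Fin n) F))

open Matrix Polynomial Submodule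

section

variable {F : Type*} [Field F]

theorem Matrix.mulVec_ne_smul_of_irreducible_charpoly {n : Type*} [Fintype n] [DecidableEq n]
    {M : Matrix n n F} (hM : Irreducible M.charpoly) (hn : Fintype.card n ≠ 1) {v : n → F}
    (hv : v ≠ 0) (c : F) : M *ᵥ v ≠ c • v := by
  intro hMv
  have hroot : M.charpoly.IsRoot c := by
    rw [← charpoly_toLin', ← Module.End.hasEigenvalue_iff_isRoot_charpoly]
    exact Module.End.hasEigenvalue_of_hasEigenvector ⟨Module.End.mem_eigenspace_iff.mpr hMv, hv⟩
  have hdeg := degree_eq_one_of_irreducible_of_root hM hroot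
  rw [charpoly_degree_eq_dim] at hdeg
  exact hn (by exact_mod_cast hdeg)

theorem Matrix.eq_scalar_of_commute_of_mulVec_eq_smul {M N : Matrix (Fin 2) (Fin 2) F}
    (hM : Irreducible M.charpoly) (hMN : Commute M N) {v : Fin 2 → F} (hv : v ≠ 0) {μ : F}
    (hNv : N *ᵥ v = μ • v) : N = scalar (Fin 2) μ := by
  set E := Module.End.eigenspace (toLin' N) μ
  have hvE : v ∈ E := Module.End.mem_eigenspace_iff.mpr hNv
  have hME : ∀ w ∈ E, M *ᵥ w ∈ E := by
    intro w hw
    rw [Module.End.mem_eigenspace_iff, toLin'_apply] at hw ⊢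
    rw [mulVec_mulVec, ← hMN.eq, ← mulVec_mulVec, hw, mulVec_smul]
  have hE : E = ⊤ := by
    by_contra hE
    have hE1 : finrank F E = 1 := by
      have hlt := Submodule.finrank_lt hE
      have hpos : finrank F E ≠ 0 :=
        Submodule.finrank_eq_zero.not.mpr ((Submodule.ne_bot_iff E).mpr ⟨v, hvE, hv⟩)
      simp only [finrank_fin_fun] at hlt
      omega
    obtain ⟨c, hc⟩ := mem_span_singleton.mp
      (eq_span_singleton_of_mem_of_finrank_eq_one hE1 hvE hv ▸ hME v hvE)
    exact mulVec_ne_smul_of_irreducible_charpoly hM (by simp) hv c hc.symm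
  refine ext_iff_mulVec.mpr fun w => ?_
  have hw : w ∈ E := hE ▸ Submodule.mem_top
  rw [Module.End.mem_eigenspace_iff, toLin'_apply] at hw
  simp [hw, scalar_apply]

theorem FiniteField.eq_one_or_eq_neg_one_of_pow_card_add_one_eq_one [Fintype F] {μ : F}
    (h : μ ^ (Fintype.card F + 1) = 1) : μ = 1 ∨ μ = -1 := by
  have hμ : μ ≠ 0 := by rintro rfl; simp at h
  rw [← sq_eq_one_iff]
  calc μ ^ 2 = μ ^ (Fintype.card F - 1) * μ ^ 2 := by
        rw [FiniteField.pow_card_sub_one_eq_one μ hμ, one_mul]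
    _ = μ ^ (Fintype.card F + 1) := by
        rw [← pow_add]; congr 1; have := Fintype.card_pos (α := F); omega
    _ = 1 := h

theorem mapGL_one {n : ℕ} (U : Submodule F (Fin n → F)) : mapGL 1 U = U := by
  simp [mapGL]

theorem mapGL_neg {n : ℕ} (A : GL (Fin n) F) (U : Submodule F (Fin n → F)) :
    mapGL (-A) U = mapGL A U := by
  simp [mapGL]

theorem exists_mulVec_eq_smul_of_mapGL_eq_self {n : ℕ} {A : GL (Fin n) F}
    {l : Submodule F (Fin n → F)} (hl : finrank F l = 1) (hA : mapGL A l = l) :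
    ∃ v ≠ 0, ∃ μ : F, (A : Matrix (Fin n) (Fin n) F) *ᵥ v = μ • v := by
  obtain ⟨v, hvl, hv⟩ := exists_mem_ne_zero_of_ne_bot (p := l) fun h => by
    rw [h, finrank_bot] at hl
    exact zero_ne_one hl
  have hAv : (A : Matrix (Fin n) (Fin n) F) *ᵥ v ∈ l := hA ▸ ⟨v, hvl, toLin'_apply _ _⟩
  rw [eq_span_singleton_of_mem_of_finrank_eq_one hl hvl hv, mem_span_singleton] at hAv
  obtain ⟨μ, hμ⟩ := hAv
  exact ⟨v, hv, μ, hμ.symm⟩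

theorem pow_sub_one_pow_add_one_eq_one_of_orderOf_eq {G : Type*} [Monoid G] {g : G} {q : ℕ}
    (hg : orderOf g = q ^ 2 - 1) : (g ^ (q - 1)) ^ (q + 1) = 1 := by
  rw [← pow_mul, mul_comm, ← Nat.sq_sub_sq, one_pow, ← hg, pow_orderOf_eq_one]

namespace Matrix.GeneralLinearGroup

theorem eq_one_or_eq_neg_one_of_commute_of_sq_eq_one {M B : GL (Fin 2) F}
    (hM : Irreducible (M : Matrix (Fin 2) (Fin 2) F).charpoly) (hMB : Commute M B)
    (hB : B ^ 2 = 1) : B = 1 ∨ B = -1 := by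
  by_cases hneg : (B : Matrix (Fin 2) (Fin 2) F) + 1 = 0
  · exact Or.inr (Units.ext (by simpa using eq_neg_of_add_eq_zero_left hneg))
  obtain ⟨w, hw⟩ : ∃ w, ((B : Matrix (Fin 2) (Fin 2) F) + 1) *ᵥ w ≠ 0 := by
    contrapose! hneg
    exact ext_iff_mulVec.mpr fun w => by rw [hneg w, zero_mulVec]
  -- `B (B + 1) = B² + B = B + 1`, so the nonzero vector `(B + 1) w` is fixed by `B`
  have hfix : (B : Matrix (Fin 2) (Fin 2) F) *ᵥ ((B + 1 : Matrix (Fin 2) (Fin 2) F) *ᵥ w)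
      = (1 : F) • ((B + 1 : Matrix (Fin 2) (Fin 2) F) *ᵥ w) := by
    rw [mulVec_mulVec, one_smul, mul_add, mul_one, ← sq, ← Units.val_pow_eq_pow_val, hB,
      Units.val_one, add_comm]
  left
  ext1
  simpa using eq_scalar_of_commute_of_mulVec_eq_smul hM hMB.units_val hw hfix

end Matrix.GeneralLinearGroup

theorem neg_one_mem_zpowers_pow_card_sub_one [Fintype F] {M : GL (Fin 2) F}
    (hM : Irreducible (M : Matrix (Fin 2) (Fin 2) F).charpoly)
    (hord : orderOf M = Fintype.card F ^ 2 - 1) :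
    (-1 : GL (Fin 2) F) ∈ Subgroup.zpowers (M ^ (Fintype.card F - 1)) := by
  set Q := Fintype.card F
  rcases Nat.even_or_odd Q with hQ | ⟨k, hk⟩
  · have hchar : ringChar F = 2 := FiniteField.even_card_iff_char_two.mpr (Nat.even_iff.mp hQ)
    have hneg : (-1 : GL (Fin 2) F) = 1 := Units.ext <| by
      rw [Units.val_neg, Units.val_one, ← map_one (scalar (Fin 2)), ← map_neg,
        neg_one_eq_one_iff.mpr hchar]
    rw [hneg]
    exact one_mem _
  have hQ : 1 < Q := Fintype.one_lt_card
  have hB : ((M ^ (Q - 1)) ^ (k + 1)) ^ 2 = 1 := by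
    rw [← pow_mul, show (k + 1) * 2 = Q + 1 by omega,
      pow_sub_one_pow_add_one_eq_one_of_orderOf_eq hord]
  have hB1 : (M ^ (Q - 1)) ^ (k + 1) ≠ 1 := by
    rw [← pow_mul]
    refine pow_ne_one_of_lt_orderOf (Nat.mul_pos (by omega) (by omega)).ne' ?_
    rw [hord, show Q ^ 2 - 1 = (Q - 1) * (Q + 1) by rw [mul_comm, ← Nat.sq_sub_sq, one_pow]]
    exact Nat.mul_lt_mul_of_pos_left (by omega) (by omega)
  have hMB : Commute M ((M ^ (Q - 1)) ^ (k + 1)) := ((Commute.refl M).pow_right _).pow_right _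
  have hBneg : (M ^ (Q - 1)) ^ (k + 1) = -1 :=
    (GeneralLinearGroup.eq_one_or_eq_neg_one_of_commute_of_sq_eq_one hM hMB hB).resolve_left hB1
  rw [← hBneg]
  exact Subgroup.pow_mem _ (Subgroup.mem_zpowers _) _

end

/-- Let `F` be a finite field with `|F| = Q`, `M ∈ GL(2, F)` a Singer cycle
(irreducible characteristic polynomial and order `Q² − 1`), and `H̄ = ⟨M^{Q−1}⟩`. Then for
every line `l` of `F²`, the stabilizer of `l` in `H̄` is `{I₂, −I₂}`. -/
theorem stabilizer_line_in_singer_subgroup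
    {F : Type*} [Field F] [Fintype F] (M : GL (Fin 2) F)
    (hirr : Irreducible (Matrix.charpoly (M : Matrix (Fin 2) (Fin 2) F)))
    (hord : orderOf M = Fintype.card F ^ 2 - 1)
    (l : Submodule F (Fin 2 → F)) (hl : finrank F l = 1) :
    {A : GL (Fin 2) F | A ∈ Subgroup.zpowers (M ^ (Fintype.card F - 1)) ∧ mapGL A l = l}
      = {(1 : GL (Fin 2) F), -1} := by
  ext A
  simp only [Set.mem_insert_iff, Set.mem_singleton_iff]
  constructor
  · rintro ⟨hA, hAl⟩
    obtain ⟨k, rfl⟩ := Subgroup.mem_zpowers_iff.mp hA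
    obtain ⟨v, hv, μ, hμ⟩ := exists_mulVec_eq_smul_of_mapGL_eq_self hl hAl
    have hMA : Commute M ((M ^ (Fintype.card F - 1)) ^ k) :=
      ((Commute.refl M).pow_right _).zpow_right k
    have hscalar := eq_scalar_of_commute_of_mulVec_eq_smul hirr hMA.units_val hv hμ
    have hpow : ((M ^ (Fintype.card F - 1)) ^ k) ^ (Fintype.card F + 1) = 1 := by
      rw [← zpow_natCast, ← _root_.zpow_mul, mul_comm, _root_.zpow_mul, zpow_natCast,
        pow_sub_one_pow_add_one_eq_one_of_orderOf_eq hord, _root_.one_zpow]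
    have hμpow : μ ^ (Fintype.card F + 1) = 1 := by
      have := congrArg Units.val hpow
      rwa [Units.val_pow_eq_pow_val, hscalar, ← map_pow, Units.val_one,
        ← map_one (scalar (Fin 2)), scalar_inj] at this
    rcases FiniteField.eq_one_or_eq_neg_one_of_pow_card_add_one_eq_one hμpow with rfl | rfl
    · exact Or.inl (Units.ext (by rw [hscalar, map_one, Units.val_one]))
    · exact Or.inr (Units.ext (by rw [hscalar, map_neg, map_one, Units.val_neg, Units.val_one]))
  · rintro (rfl | rfl)
    · exact ⟨one_mem _, mapGL_one l⟩
    · exact ⟨neg_one_mem_zpowers_pow_card_sub_one hirr hord, by rw [mapGL_neg, mapGL_one]⟩
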